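/- Let J = S \ {s_{i-2}, s_{i-1}, s_i} and u, v ∈ (S_n)^J with u ≤ v, u^{-1}(i−1) ≥ v^{-1}(i−1) and u^{-1}(i) < v^{-1}(i). Suppose s_j is a right descent of v with v(j) = i−1, v(j+1) < i−1, and s_j is not a right descent of u with u(j) < i−1 and u(j+1) = i. Then u s_j ≤ v s_j in the Bruhat order. -/

import Mathlib

/-!
The Bruhat order on `S_n` is characterised by Ehresmann's tableau criterion: `u ≤ v` iff
`#{r ≤ a | b ≤ u r} ≤ #{r ≤ a | b ≤ v r}` for all `a, b`. One direction holds because a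
length-increasing transposition can only raise these counts, the other by repeatedly swapping
at the first position where `u` and `v` differ. Right multiplication by `s_j` changes the counts
only in row `a = j`, where `u` trades `u j` for `u (j + 1) = i` and `v` trades `i - 1` for
`v (j + 1)`. For `b ∈ {i - 1, i}` the needed inequality comes from the criterion for `u ≤ v` in
row `j + 1` and from `u⁻¹ (i - 1) > j = v⁻¹ (i - 1)`. For `b < i - 1` it comes from
`u ∈ (S_n)^J`, which places `1, …, i - 2` in increasing positions: either all of `1, …, b - 1`
lie left of `j`, or the count in row `j` is the same for `b` and for `i - 1`.
-/

open Finset Polynomial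

/-- The inversion number (Coxeter length) of a permutation of `ℕ`, counted on `{1, …, n}`. -/
def invNum (n : ℕ) (u : Equiv.Perm ℕ) : ℕ :=
  (((Finset.Icc 1 n) ×ˢ (Finset.Icc 1 n)).filter
    (fun p => p.1 < p.2 ∧ u p.2 < u p.1)).card

/-- `u` is a member of `S_n`: it fixes every point outside `{1, …, n}`. -/
def IsPermOn (n : ℕ) (u : Equiv.Perm ℕ) : Prop :=
  ∀ m, m ∉ Finset.Icc 1 n → u m = m

/-- The adjacent transposition `s_i`, interchanging `i` and `i + 1`. -/
def sAdj (i : ℕ) : Equiv.Perm ℕ := Equiv.swap i (i + 1)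

/-- The Bruhat order on `S_n`: `u ≤ v` iff `v` is obtained from `u` by successively
multiplying on the right by transpositions, increasing the length at each step. -/
def BruhatLE (n : ℕ) (u v : Equiv.Perm ℕ) : Prop :=
  Relation.ReflTransGen
    (fun a b => invNum n a < invNum n b ∧
      ∃ i j, 1 ≤ i ∧ i < j ∧ j ≤ n ∧ b = a * Equiv.swap i j) u v

/-- `(S_n)^J`, the minimal coset representatives, where `J = S \ {s_e : e ∈ E}`. -/
def MinReps (n : ℕ) (E : Set ℕ) (u : Equiv.Perm ℕ) : Prop :=
  ∀ j, 1 ≤ j → j ≤ n - 1 → j ∉ E → invNum n u < invNum n (sAdj j * u)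

/-- `|{r ∈ u⁻¹([m]) : r < j}|`, the number of positions `r < j` of `u` holding
an element of `{1, …, m}`. -/
def posLT (n m j : ℕ) (u : Equiv.Perm ℕ) : ℕ :=
  ((Finset.Icc 1 n).filter (fun r => r < j ∧ u r ∈ Finset.Icc 1 m)).card

/-- Deodhar's recursion with `x = q` for the parabolic `R`-polynomials of `S_n`,
for `J = S \ {s_e : e ∈ E}`. -/
def IsRFamilyQ (n : ℕ) (E : Set ℕ)
    (R : Equiv.Perm ℕ → Equiv.Perm ℕ → Polynomial ℤ) : Prop :=
  (∀ u v, MinReps n E u → MinReps n E v → ¬ BruhatLE n u v → R u v = 0) ∧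
  (∀ u, MinReps n E u → R u u = 1) ∧
  (∀ u v, MinReps n E u → MinReps n E v → BruhatLE n u v → u ≠ v →
    ∀ j, 1 ≤ j → j ≤ n - 1 → v (j + 1) < v j →
      ((u (j + 1) < u j → R u v = R (u * sAdj j) (v * sAdj j)) ∧
       (¬ u (j + 1) < u j → MinReps n E (u * sAdj j) →
          R u v = X * R (u * sAdj j) (v * sAdj j) + (X - 1) * R u (v * sAdj j)) ∧
       (¬ u (j + 1) < u j → ¬ MinReps n E (u * sAdj j) →
          R u v = - R u (v * sAdj j))))

open Equiv

namespace IsPermOn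

variable {n : ℕ} {w : Perm ℕ}

lemma apply_mem_Icc (h : IsPermOn n w) {a : ℕ} (ha : a ∈ Icc 1 n) : w a ∈ Icc 1 n := by
  by_contra hc
  exact hc (by rwa [w.injective (h _ hc)])

lemma one_le_apply (h : IsPermOn n w) {a : ℕ} (ha : 1 ≤ a) : 1 ≤ w a := by
  by_cases hmem : a ∈ Icc 1 n
  · exact (mem_Icc.1 (h.apply_mem_Icc hmem)).1
  · rwa [h a hmem]

lemma symm (h : IsPermOn n w) : IsPermOn n w.symm := fun m hm => by
  rw [w.symm_apply_eq, h m hm]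

lemma mul_swap (h : IsPermOn n w) {x y : ℕ} (hx : x ∈ Icc 1 n) (hy : y ∈ Icc 1 n) :
    IsPermOn n (w * swap x y) := fun m hm => by
  rw [Perm.mul_apply, swap_apply_of_ne_of_ne (by rintro rfl; exact hm hx)
    (by rintro rfl; exact hm hy), h m hm]

end IsPermOn

lemma swap_apply_mem_Icc {n x y r : ℕ} (hx : x ∈ Icc 1 n) (hy : y ∈ Icc 1 n)
    (hr : r ∈ Icc 1 n) : swap x y r ∈ Icc 1 n := by
  rw [swap_apply_def]
  split_ifs <;> assumption

lemma apply_swap_lt_apply_swap_of_not_lt {x y p q : ℕ} (w : Perm ℕ) (hxy : x < y)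
    (hw : w x < w y) (hpq : p < q) (hinv : w q < w p) (hσ : ¬ swap x y p < swap x y q) :
    w (swap x y q) < w (swap x y p) := by
  simp only [swap_apply_def] at hσ ⊢
  split_ifs at hσ ⊢ <;> subst_vars <;> omega

lemma invNum_lt_invNum_mul_swap {n x y : ℕ} (w : Perm ℕ) (hx : 1 ≤ x) (hxy : x < y)
    (hy : y ≤ n) (hw : w x < w y) : invNum n w < invNum n (w * swap x y) := by
  set σ := swap x y with hσ
  have hxI : x ∈ Icc 1 n := mem_Icc.2 ⟨hx, by omega⟩
  have hyI : y ∈ Icc 1 n := mem_Icc.2 ⟨by omega, hy⟩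
  have hσσ : ∀ r, σ (σ r) = r := swap_apply_self x y
  -- an inversion `(p, q)` of `w` goes to `(σ p, σ q)` if `σ` keeps `p, q` in order;
  -- otherwise it stays an inversion of `w * σ`
  let ψ : ℕ × ℕ → ℕ × ℕ := fun p => if σ p.1 < σ p.2 then (σ p.1, σ p.2) else p
  have hmem : (x, y) ∈ ((Icc 1 n ×ˢ Icc 1 n).filter
      fun p => p.1 < p.2 ∧ (w * σ) p.2 < (w * σ) p.1) := by
    simp only [mem_filter, mem_product, Perm.mul_apply, hσ, swap_apply_left,
      swap_apply_right]
    exact ⟨⟨hxI, hyI⟩, hxy, hw⟩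
  refine (card_le_card_of_injOn ψ ?_ ?_).trans_lt (card_erase_lt_of_mem hmem)
  · rintro ⟨p, q⟩ hpq
    simp only [mem_coe, mem_filter, mem_product] at hpq
    obtain ⟨⟨hp, hq⟩, hlt, hinv⟩ := hpq
    rw [mem_coe, mem_erase, mem_filter, mem_product]
    simp only [ψ, Perm.mul_apply, ne_eq]
    split_ifs with hσpq <;> simp only [Prod.mk.injEq]
    · refine ⟨?_, ⟨swap_apply_mem_Icc hxI hyI hp, swap_apply_mem_Icc hxI hyI hq⟩, hσpq,
        by rwa [hσσ, hσσ]⟩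
      rintro ⟨h1, h2⟩
      have hp' : p = y := by rw [← hσσ p, h1, hσ, swap_apply_left]
      have hq' : q = x := by rw [← hσσ q, h2, hσ, swap_apply_right]
      omega
    · exact ⟨by rintro ⟨rfl, rfl⟩; omega, ⟨hp, hq⟩, hlt,
        apply_swap_lt_apply_swap_of_not_lt w hxy hw hlt hinv hσpq⟩
  · rintro ⟨p, q⟩ hpq ⟨p', q'⟩ hpq' h
    simp only [mem_coe, mem_filter, mem_product] at hpq hpq'
    simp only [ψ] at h
    split_ifs at h with h1 h2 h2 <;> simp only [Prod.mk.injEq] at h ⊢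
    · exact ⟨σ.injective h.1, σ.injective h.2⟩
    · obtain ⟨rfl, rfl⟩ := h
      rw [hσσ, hσσ] at h2
      omega
    · obtain ⟨rfl, rfl⟩ := h
      rw [hσσ, hσσ] at h1
      omega
    · exact h

lemma apply_lt_of_invNum_lt_invNum_mul_swap {n x y : ℕ} {w : Perm ℕ} (hx : 1 ≤ x)
    (hxy : x < y) (hy : y ≤ n) (h : invNum n w < invNum n (w * swap x y)) : w x < w y := by
  by_contra hge
  have hlt : w y < w x := lt_of_le_of_ne (not_lt.1 hge) (fun he => by
    have := w.injective he; omega)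
  have := invNum_lt_invNum_mul_swap (n := n) (w * swap x y) hx hxy hy
    (by simpa only [Perm.mul_apply, swap_apply_left, swap_apply_right] using hlt)
  rw [mul_assoc, swap_mul_self, mul_one] at this
  omega

def countGE (w : Perm ℕ) (a b : ℕ) : ℕ := #{r ∈ Icc 1 a | b ≤ w r}

section countGE

variable (w : Perm ℕ)

lemma countGE_zero_right (a : ℕ) : countGE w a 0 = a := by
  simp [countGE]

lemma countGE_succ (a b : ℕ) :
    countGE w (a + 1) b = countGE w a b + if b ≤ w (a + 1) then 1 else 0 := by
  rw [countGE, countGE, ← insert_Icc_right_eq_Icc_add_one (by omega), filter_insert]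
  split_ifs
  · exact card_insert_of_notMem (by simp)
  · rfl

lemma countGE_antitone (a : ℕ) : Antitone (countGE w a) := fun _ _ h =>
  card_le_card fun _ hr => by
    simp only [mem_filter] at hr ⊢
    exact ⟨hr.1, h.trans hr.2⟩

lemma countGE_eq_add_card {b c : ℕ} (hbc : b ≤ c) (a : ℕ) :
    countGE w a b = countGE w a c + #{r ∈ Icc 1 a | b ≤ w r ∧ w r < c} := by
  rw [countGE, countGE, ← card_filter_add_card_filter_not (p := fun r => c ≤ w r),
    filter_filter, filter_filter]
  congr 2 <;> ext r <;> simp only [mem_filter, mem_Icc] <;> omega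

lemma countGE_add_card_filter_lt (a b : ℕ) :
    countGE w a b + #{r ∈ Icc 1 a | w r < b} = a := by
  simpa [countGE_zero_right] using (countGE_eq_add_card w (Nat.zero_le b) a).symm

lemma countGE_congr {b c : ℕ} (hbc : b ≤ c) {a : ℕ}
    (h : ∀ r ∈ Icc 1 a, b ≤ w r → c ≤ w r) : countGE w a b = countGE w a c :=
  congrArg card (filter_congr fun r hr => ⟨h r hr, hbc.trans⟩)

lemma countGE_eq_of_eqOn {w' : Perm ℕ} {a : ℕ} (h : ∀ r ∈ Icc 1 a, w r = w' r) (b : ℕ) :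
    countGE w a b = countGE w' a b :=
  congrArg card (filter_congr fun r hr => by rw [h r hr])

variable {x y : ℕ}

lemma countGE_mul_swap_of_mapsTo {a : ℕ} (h : ∀ r ∈ Icc 1 a, swap x y r ∈ Icc 1 a)
    (b : ℕ) : countGE (w * swap x y) a b = countGE w a b := by
  rw [countGE, countGE]
  exact card_nbij' (swap x y) (swap x y) (fun r hr => by
      rw [mem_coe, mem_filter] at hr ⊢
      exact ⟨h r hr.1, hr.2⟩)
    (fun r hr => by
      rw [mem_coe, mem_filter] at hr
      rw [mem_coe, mem_filter, Perm.mul_apply, swap_apply_self]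
      exact ⟨h r hr.1, hr.2⟩)
    (fun r _ => swap_apply_self x y r) (fun r _ => swap_apply_self x y r)

lemma countGE_mul_swap {a : ℕ} (hx : 1 ≤ x) (hxy : x ≤ y) (ha : a < x ∨ y ≤ a) (b : ℕ) :
    countGE (w * swap x y) a b = countGE w a b :=
  countGE_mul_swap_of_mapsTo w (fun r hr => by
    simp only [mem_Icc] at hr ⊢
    rw [swap_apply_def]
    split_ifs <;> omega) b

lemma countGE_mul_swap_add {a : ℕ} (hx : 1 ≤ x) (hxa : x ≤ a) (hay : a < y) (b : ℕ) :
    countGE (w * swap x y) a b + (if b ≤ w x then 1 else 0)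
      = countGE w a b + if b ≤ w y then 1 else 0 := by
  have hIcc : Icc 1 a = insert x ((Icc 1 a).erase x) :=
    (insert_erase (mem_Icc.2 ⟨hx, hxa⟩)).symm
  have hfix : ∀ r ∈ (Icc 1 a).erase x, (w * swap x y) r = w r := fun r hr => by
    rw [mem_erase, mem_Icc] at hr
    rw [Perm.mul_apply, swap_apply_of_ne_of_ne hr.1 (by omega)]
  rw [countGE, countGE, hIcc, filter_insert, filter_insert,
    filter_congr fun r hr => by rw [hfix r hr], Perm.mul_apply, swap_apply_left]
  split_ifs <;> simp

lemma countGE_le_countGE_mul_swap (hx : 1 ≤ x) (hxy : x < y) (hw : w x < w y) (a b : ℕ) :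
    countGE w a b ≤ countGE (w * swap x y) a b := by
  rcases lt_or_ge a x with hax | hxa
  · rw [countGE_mul_swap w hx hxy.le (.inl hax)]
  rcases lt_or_ge a y with hay | hya
  · have := countGE_mul_swap_add w hx hxa hay b
    split_ifs at this <;> omega
  · rw [countGE_mul_swap w hx hxy.le (.inr hya)]

end countGE

namespace IsPermOn

variable {n : ℕ} {w : Perm ℕ}

lemma le_countGE_add (hw : IsPermOn n w) {a p : ℕ} (hp : a < p) (b : ℕ) :
    a + (if w p < b then 1 else 0) ≤ countGE w a b + (b - 1) := by
  have hcompl := countGE_add_card_filter_lt w a b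
  have hcard : #{r ∈ insert p (Icc 1 a) | w r < b} ≤ b - 1 := by
    rw [← Nat.card_Ico 1 b]
    refine card_le_card_of_injOn w (fun r hr => ?_) w.injective.injOn
    rw [mem_coe, mem_filter, mem_insert, mem_Icc] at hr
    rw [mem_coe, mem_Ico]
    exact ⟨hw.one_le_apply (by omega), hr.2⟩
  rw [filter_insert] at hcard
  split_ifs at hcard ⊢
  · rw [card_insert_of_notMem (by simp only [mem_filter, mem_Icc]; omega)] at hcard
    omega
  · omega

lemma countGE_add_le (hw : IsPermOn n w) {a b : ℕ}
    (h : ∀ k, 1 ≤ k → k < b → w.symm k ≤ a) : countGE w a b + (b - 1) ≤ a := by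
  have hcompl := countGE_add_card_filter_lt w a b
  have : b - 1 ≤ #{r ∈ Icc 1 a | w r < b} := by
    rw [← Nat.card_Ico 1 b]
    refine card_le_card_of_injOn w.symm (fun k hk => ?_) w.symm.injective.injOn
    rw [mem_coe, mem_Ico] at hk
    rw [mem_coe, mem_filter, mem_Icc, Equiv.apply_symm_apply]
    exact ⟨⟨hw.symm.one_le_apply hk.1, h k hk.1 hk.2⟩, hk.2⟩
  omega

end IsPermOn

lemma BruhatLE.countGE_le {n : ℕ} {u v : Perm ℕ} (h : BruhatLE n u v) (a b : ℕ) :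
    countGE u a b ≤ countGE v a b := by
  induction h with
  | refl => exact le_rfl
  | tail _ hstep ih =>
    obtain ⟨hlt, x, y, hx, hxy, hy, rfl⟩ := hstep
    exact ih.trans (countGE_le_countGE_mul_swap _ hx hxy
      (apply_lt_of_invNum_lt_invNum_mul_swap hx hxy hy hlt) a b)

section TableauCriterion

variable {n : ℕ} {u v : Perm ℕ}

lemma countGE_lt_countGE_of_agree {a α β : ℕ} (haα : a ≤ α)
    (hagree : ∀ r < a, u r = v r)
    (hgap : ∀ r, a < r → r ≤ α → ¬ (u a < u r ∧ u r ≤ v a))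
    (hβ : u a < β) (hβv : β ≤ v a) (ha : 1 ≤ a)
    (hdom : countGE u α (v a + 1) ≤ countGE v α (v a + 1)) :
    countGE u α β < countGE v α β := by
  rw [countGE_eq_add_card u (by omega : β ≤ v a + 1),
    countGE_eq_add_card v (by omega : β ≤ v a + 1)]
  suffices #{r ∈ Icc 1 α | β ≤ u r ∧ u r < v a + 1}
      < #{r ∈ Icc 1 α | β ≤ v r ∧ v r < v a + 1} by omega
  refine card_lt_card ((ssubset_iff_of_subset fun r hr => ?_).2 ⟨a, ?_, ?_⟩)
  · simp only [mem_filter, mem_Icc] at hr ⊢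
    have hra : r < a := by
      by_contra hra
      rcases eq_or_lt_of_le (not_lt.1 hra) with rfl | har
      · omega
      · exact hgap r har hr.1.2 ⟨by omega, by omega⟩
    rwa [← hagree r hra]
  · simp only [mem_filter, mem_Icc]
    omega
  · simp only [mem_filter, mem_Icc]
    omega

lemma exists_first_ne_of_countGE_le (hu : IsPermOn n u) (hv : IsPermOn n v)
    (h : ∀ a b, countGE u a b ≤ countGE v a b) (hne : u ≠ v) :
    ∃ a ∈ Icc 1 n, u a < v a ∧ ∀ r < a, u r = v r := by
  classical
  have hex : ∃ r, u r ≠ v r := by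
    by_contra! hall
    exact hne (Equiv.ext hall)
  obtain ⟨a, hane, hagree⟩ : ∃ a, u a ≠ v a ∧ ∀ r < a, u r = v r :=
    ⟨Nat.find hex, Nat.find_spec hex, fun r hr => not_not.1 (Nat.find_min hex hr)⟩
  have haI : a ∈ Icc 1 n := by
    by_contra haI
    exact hane (by rw [hu a haI, hv a haI])
  refine ⟨a, haI, ?_, hagree⟩
  have ha1 : 1 ≤ a := (mem_Icc.1 haI).1
  have hsu := countGE_succ u (a - 1) (u a)
  have hsv := countGE_succ v (a - 1) (u a)
  rw [Nat.sub_add_cancel ha1] at hsu hsv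
  rw [countGE_eq_of_eqOn u (a := a - 1)
    (fun r hr => hagree r (by rw [mem_Icc] at hr; omega))] at hsu
  have := h a (u a)
  split_ifs at hsu hsv <;> omega

/-- One step of the converse of the tableau criterion: if `a` is the first position where
`u` and `v` differ and `c > a` is the first position with `u a < u c ≤ v a`, then
`u * swap a c` still lies below `v`. -/
lemma exists_swap_countGE_le (hu : IsPermOn n u) (hv : IsPermOn n v)
    (h : ∀ a b, countGE u a b ≤ countGE v a b) (hne : u ≠ v) :
    ∃ x y, 1 ≤ x ∧ x < y ∧ y ≤ n ∧ u x < u y ∧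
      ∀ a b, countGE (u * swap x y) a b ≤ countGE v a b := by
  classical
  obtain ⟨a, haI, hua, hagree⟩ := exists_first_ne_of_countGE_le hu hv h hne
  have ha1 : 1 ≤ a := (mem_Icc.1 haI).1
  have hwit : a < u.symm (v a) := by
    by_contra! hle
    rcases eq_or_lt_of_le hle with heq | hlt
    · have := u.apply_symm_apply (v a)
      rw [heq] at this
      exact hua.ne this
    · have := hagree _ hlt
      rw [Equiv.apply_symm_apply] at this
      exact hlt.ne (v.injective this.symm)
  have hcex : ∃ s, a < s ∧ u a < u s ∧ u s ≤ v a := ⟨_, hwit, by simpa using hua, by simp⟩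
  obtain ⟨c, ⟨hac, huc, hucv⟩, hgap, hcle⟩ : ∃ c, (a < c ∧ u a < u c ∧ u c ≤ v a) ∧
      (∀ r, a < r → r < c → ¬ (u a < u r ∧ u r ≤ v a)) ∧ c ≤ u.symm (v a) :=
    ⟨Nat.find hcex, Nat.find_spec hcex,
      fun r har hrc hr => Nat.find_min hcex hrc ⟨har, hr⟩,
      Nat.find_min' hcex ⟨hwit, by simpa using hua, by simp⟩⟩
  have hcn : c ≤ n :=
    hcle.trans (mem_Icc.1 (hu.symm.apply_mem_Icc (hv.apply_mem_Icc haI))).2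
  refine ⟨a, c, ha1, hac, hcn, huc, fun α β => ?_⟩
  rcases lt_or_ge α a with hαa | haα
  · rw [countGE_mul_swap u ha1 hac.le (.inl hαa)]
    exact h α β
  rcases lt_or_ge α c with hαc | hcα
  · have hswap := countGE_mul_swap_add u ha1 haα hαc β
    by_cases hβ : u a < β ∧ β ≤ u c
    · have := countGE_lt_countGE_of_agree haα hagree
        (fun r har hrα => hgap r har (by omega)) hβ.1 (hβ.2.trans hucv) ha1 (h α _)
      split_ifs at hswap <;> omega
    · have := h α β
      split_ifs at hswap <;> omega
  · rw [countGE_mul_swap u ha1 hac.le (.inr hcα)]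
    exact h α β

lemma bruhatLE_of_countGE_le (hu : IsPermOn n u) (hv : IsPermOn n v)
    (h : ∀ a b, countGE u a b ≤ countGE v a b) : BruhatLE n u v := by
  let total : Perm ℕ → ℕ := fun w => ∑ p ∈ Icc 1 n ×ˢ Icc 1 n, countGE w p.1 p.2
  induction hN : total v - total u using Nat.strong_induction_on generalizing u with
  | _ N ih =>
  by_cases huv : u = v
  · subst huv
    exact .refl
  obtain ⟨x, y, hx, hxy, hy, hlt, hdom⟩ := exists_swap_countGE_le hu hv h huv
  have hxI : x ∈ Icc 1 n := mem_Icc.2 ⟨hx, by omega⟩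
  have hyI : y ∈ Icc 1 n := mem_Icc.2 ⟨by omega, hy⟩
  have hstep : total u < total (u * swap x y) := by
    refine sum_lt_sum (fun p _ => countGE_le_countGE_mul_swap u hx hxy hlt _ _)
      ⟨(x, u y), mem_product.2 ⟨hxI, hu.apply_mem_Icc hyI⟩, ?_⟩
    have := countGE_mul_swap_add u hx le_rfl hxy (u y)
    rw [if_neg hlt.not_ge, if_pos le_rfl] at this
    dsimp only
    omega
  have hle : total (u * swap x y) ≤ total v := sum_le_sum fun p _ => hdom _ _
  exact .head ⟨invNum_lt_invNum_mul_swap u hx hxy hy hlt, x, y, hx, hxy, hy, rfl⟩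
    (ih _ (by omega) (hu.mul_swap hxI hyI) hdom rfl)

end TableauCriterion

namespace MinReps

variable {n : ℕ} {E : Set ℕ} {w : Perm ℕ}

lemma symm_lt_symm_add_one (hw : IsPermOn n w) (h : MinReps n E w) {k : ℕ} (hk : 1 ≤ k)
    (hkn : k + 1 ≤ n) (hkE : k ∉ E) : w.symm k < w.symm (k + 1) := by
  have hstep := h k hk (by omega) hkE
  rw [sAdj, swap_mul_eq_mul_swap, Perm.inv_def] at hstep
  have hxI := hw.symm.apply_mem_Icc (mem_Icc.2 ⟨hk, by omega⟩ : k ∈ Icc 1 n)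
  have hyI := hw.symm.apply_mem_Icc (mem_Icc.2 ⟨by omega, hkn⟩ : k + 1 ∈ Icc 1 n)
  rcases lt_trichotomy (w.symm k) (w.symm (k + 1)) with hlt | heq | hgt
  · exact hlt
  · simp at heq
  · rw [swap_comm] at hstep
    have := apply_lt_of_invNum_lt_invNum_mul_swap (mem_Icc.1 hyI).1 hgt (mem_Icc.1 hxI).2 hstep
    simp at this

lemma strictMonoOn_symm (hw : IsPermOn n w) (h : MinReps n E w) {m : ℕ} (hm : m ≤ n)
    (hE : ∀ k, 1 ≤ k → k < m → k ∉ E) : StrictMonoOn w.symm (Set.Icc 1 m) :=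
  strictMonoOn_of_lt_add_one Set.ordConnected_Icc fun k _ hk hk1 =>
    h.symm_lt_symm_add_one hw hk.1 (hk1.2.trans hm) (hE k hk.1 hk1.2)

end MinReps

section Subcase

variable {n i j : ℕ} {u v : Perm ℕ}

lemma countGE_mul_sAdj_of_ne (w : Perm ℕ) {a : ℕ} (hj : 1 ≤ j) (ha : a ≠ j) (b : ℕ) :
    countGE (w * sAdj j) a b = countGE w a b :=
  countGE_mul_swap w hj (Nat.le_add_right j 1) (by omega) b

lemma countGE_add_one_le_of_succ {b : ℕ}
    (hdom : countGE u (j + 1) b ≤ countGE v (j + 1) b) (hu : b ≤ u (j + 1))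
    (hv : v (j + 1) < b) : countGE u j b + 1 ≤ countGE v j b := by
  rw [countGE_succ, countGE_succ, if_pos hu, if_neg hv.not_ge] at hdom
  exact hdom

lemma countGE_add_two_le_of_add_one {b : ℕ}
    (hdom : countGE u j (b + 1) + 1 ≤ countGE v j (b + 1)) (hu : j < u.symm b) (hvj : v j = b)
    (hj : 1 ≤ j) : countGE u j b + 2 ≤ countGE v j b := by
  have hu' : countGE u j b = countGE u j (b + 1) := by
    refine countGE_congr u (by omega) fun r hr hr' => ?_
    have : u r ≠ b := fun he => by
      rw [← he, Equiv.symm_apply_apply] at hu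
      rw [mem_Icc] at hr
      omega
    omega
  have hv' : countGE v j (b + 1) + 1 ≤ countGE v j b := by
    rw [countGE_eq_add_card v (by omega : b ≤ b + 1)]
    refine Nat.add_le_add_left (card_pos.2 ⟨j, ?_⟩) _
    rw [mem_filter, mem_Icc, hvj]
    omega
  omega

lemma countGE_mul_sAdj_self_le (hu : IsPermOn n u) (hv : IsPermOn n v)
    (hmono : StrictMonoOn u.symm (Set.Icc 1 (i - 2)))
    (hdom : ∀ a b, countGE u a b ≤ countGE v a b) (h1 : j < u.symm (i - 1))
    (hvj : v j = i - 1) (hvj1 : v (j + 1) < i - 1) (huj : u j < i - 1) (huj1 : u (j + 1) = i)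
    (hj : 1 ≤ j) (b : ℕ) : countGE (u * sAdj j) j b ≤ countGE (v * sAdj j) j b := by
  rw [sAdj]
  have hsu := countGE_mul_swap_add u hj le_rfl j.lt_add_one b
  have hsv := countGE_mul_swap_add v hj le_rfl j.lt_add_one b
  rw [huj1] at hsu
  rw [hvj] at hsv
  have hrow := hdom j b
  have hat := countGE_add_one_le_of_succ (hdom (j + 1) i) huj1.ge (by omega)
  have hpred := countGE_add_two_le_of_add_one
    (by rwa [Nat.sub_add_cancel (by omega : 1 ≤ i)]) h1 hvj hj
  have hujI : u j ∈ Set.Icc 1 (i - 2) := ⟨hu.one_le_apply hj, by omega⟩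
  rcases le_or_gt (i - 1) b with hb | hb
  · obtain hb | rfl | rfl : i < b ∨ b = i ∨ b = i - 1 := by omega
    all_goals split_ifs at hsu hsv <;> omega
  rcases le_or_gt b (u j) with hbu | hbu
  · -- `1, …, b - 1` all sit to the left of position `j` in `u`
    have hleft := hu.countGE_add_le (a := j) (b := b) fun k hk hkb => by
      simpa using (hmono ⟨hk, by omega⟩ hujI (by omega)).le
    have hright := hv.le_countGE_add j.lt_add_one b
    split_ifs at hsu hsv hright <;> omega
  · -- no value in `[b, i - 2]` sits at a position `≤ j` of `u`
    have hcongr : countGE u j b = countGE u j (i - 1) := by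
      refine countGE_congr u (by omega) fun r hr hbr => ?_
      by_contra! hr'
      have := hmono hujI ⟨hu.one_le_apply (mem_Icc.1 hr).1, by omega⟩ (by omega)
      simp only [Equiv.symm_apply_apply, mem_Icc] at this hr
      omega
    have hanti := countGE_antitone v j hb.le
    split_ifs at hsu hsv <;> omega

end Subcase

theorem subcase_iii_claim_general (n i j : ℕ) (hi2 : i ≤ n - 1)
    (hj1 : 1 ≤ j) (hj2 : j ≤ n - 1)
    (u v : Equiv.Perm ℕ) (hu : IsPermOn n u) (hv : IsPermOn n v)
    (hu' : MinReps n {i - 2, i - 1, i} u)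
    (huv : BruhatLE n u v)
    (h1 : v.symm (i - 1) ≤ u.symm (i - 1))
    (hvj : v j = i - 1) (hvj1 : v (j + 1) < i - 1)
    (huj : u j < i - 1) (huj1 : u (j + 1) = i) :
    BruhatLE n (u * sAdj j) (v * sAdj j) := by
  have hmono : StrictMonoOn u.symm (Set.Icc 1 (i - 2)) :=
    hu'.strictMonoOn_symm hu (by omega) fun k _ hk => by
      simp only [Set.mem_insert_iff, Set.mem_singleton_iff]
      omega
  have h1' : j < u.symm (i - 1) := by
    rw [show v.symm (i - 1) = j by rw [Equiv.symm_apply_eq, hvj]] at h1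
    refine h1.lt_of_ne fun he => ?_
    rw [he, Equiv.apply_symm_apply] at huj
    omega
  have hjI : j ∈ Icc 1 n := mem_Icc.2 ⟨hj1, by omega⟩
  have hj1I : j + 1 ∈ Icc 1 n := mem_Icc.2 ⟨by omega, by omega⟩
  refine bruhatLE_of_countGE_le (hu.mul_swap hjI hj1I) (hv.mul_swap hjI hj1I) fun a b => ?_
  rcases eq_or_ne a j with rfl | ha
  · exact countGE_mul_sAdj_self_le hu hv hmono huv.countGE_le h1' hvj hvj1 huj huj1 hj1 b
  · rw [countGE_mul_sAdj_of_ne u hj1 ha, countGE_mul_sAdj_of_ne v hj1 ha]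
    exact huv.countGE_le a b

/-- Subcase (iii) claim: with `u⁻¹(i-1) ≥ v⁻¹(i-1)`, `u⁻¹(i) < v⁻¹(i)`, `s_j` a right
descent of `v` with `v j = i - 1`, `v (j+1) < i - 1`, `s_j` not a right descent of `u`
with `u j < i - 1` and `u (j+1) = i`, one has `u s_j ≤ v s_j` in the Bruhat order. -/
theorem subcase_iii_claim (n i j : ℕ) (hi1 : 3 ≤ i) (hi2 : i ≤ n - 1)
    (hj1 : 1 ≤ j) (hj2 : j ≤ n - 1)
    (u v : Equiv.Perm ℕ) (hu : IsPermOn n u) (hv : IsPermOn n v)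
    (hu' : MinReps n {i - 2, i - 1, i} u) (hv' : MinReps n {i - 2, i - 1, i} v)
    (huv : BruhatLE n u v)
    (h1 : v.symm (i - 1) ≤ u.symm (i - 1)) (h2 : u.symm i < v.symm i)
    (hvj : v j = i - 1) (hvj1 : v (j + 1) < i - 1)
    (huj : u j < i - 1) (huj1 : u (j + 1) = i) :
    BruhatLE n (u * sAdj j) (v * sAdj j) :=
  subcase_iii_claim_general n i j hi2 hj1 hj2 u v hu hv hu' huv h1 hvj hvj1 huj huj1
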